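/- (Talagrand) A filter 𝓕 on a countably infinite set I (containing all cofinite sets) is meager as a subset of 2^I if and only if there exists a finite-to-one function φ : I → ω such that for every x ∈ 𝓕, the set {j ∈ ω : x ∩ φ⁻¹(j) = ∅} is finite. -/

import Mathlib

/-- A filter on a set `I` (in the combinatorial sense): a family of non-empty subsets of `I`
closed under finite intersections and supersets, containing all cofinite sets. -/
def IsFilterOn {I : Type*} (F : Set (Set I)) : Prop :=
  (∀ s ∈ F, s.Nonempty) ∧ (∀ s ∈ F, ∀ t ∈ F, s ∩ t ∈ F) ∧
    (∀ s ∈ F, ∀ t : Set I, s ⊆ t → t ∈ F) ∧ (∀ s : Set I, sᶜ.Finite → s ∈ F)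

/-- Characteristic function of a subset, as an element of the Cantor space `I → Bool`. -/
noncomputable def chi {I : Type*} (s : Set I) : I → Bool :=
  fun i => @decide (i ∈ s) (Classical.propDecidable _)

/-!
For `X` finite and `I` countable, a set `M ⊆ X^I` is meagre iff there are a partition of `I` into
finite blocks `φ ⁻¹' {k}` and a point `w` such that every `z ∈ M` agrees with `w` on only finitely
many blocks. Given dense open sets `U₀ ⊇ U₁ ⊇ ⋯` missing `M`, the blocks are chosen one after the
other so that agreeing with `w` on the `k`-th block forces `z ∈ U_k`; this is possible because
there are only finitely many patterns on the earlier blocks. For an upward closed family `F`, if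
`x ∈ F` missed infinitely many blocks, then `x ∪ w ∈ F` would agree with `w` on all of them;
conversely, `w = ∅` turns the block condition into the condition on the filter.
-/

open Set

theorem IsMeagre.exists_antitone_isOpen_dense {Y : Type*} [TopologicalSpace Y] {M : Set Y}
    (hM : IsMeagre M) :
    ∃ U : ℕ → Set Y, (∀ n, IsOpen (U n)) ∧ (∀ n, Dense (U n)) ∧ Antitone U ∧
      ∀ z ∈ M, ∃ n, z ∉ U n := by
  obtain ⟨S, hSo, hSd, hSc, hSM⟩ := mem_residual_iff.1 hM
  obtain ⟨f, hf⟩ := (hSc.insert univ).exists_eq_range (insert_nonempty _ _)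
  have hf_open_dense (n : ℕ) : IsOpen (f n) ∧ Dense (f n) := by
    rcases (hf ▸ mem_range_self n : f n ∈ insert univ S) with h | h
    · simp [h]
    · exact ⟨hSo _ h, hSd _ h⟩
  have hfo (n : ℕ) : ∀ t ∈ f '' Iic n, IsOpen t := forall_mem_image.2 fun m _ => (hf_open_dense m).1
  have hfd (n : ℕ) : ∀ t ∈ f '' Iic n, Dense t := forall_mem_image.2 fun m _ => (hf_open_dense m).2
  refine ⟨fun n => ⋂₀ (f '' Iic n), fun n => ((finite_Iic n).image f).isOpen_sInter (hfo n),
    fun n => ((finite_Iic n).image f).dense_sInter (hfo n) (hfd n),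
    fun m n h => sInter_subset_sInter (image_mono (Iic_subset_Iic.2 h)), fun z hz => ?_⟩
  obtain ⟨t, htS, hzt⟩ : ∃ t ∈ S, z ∉ t := by
    by_contra! h
    exact hSM h hz
  obtain ⟨n, rfl⟩ : t ∈ range f := hf ▸ mem_insert_of_mem _ htS
  exact ⟨n, fun h => hzt (h _ (mem_image_of_mem f self_mem_Iic))⟩

theorem exists_preimage_singleton_eq_sdiff {I : Type*} {g : ℕ → Set I} (hg : Monotone g)
    (h0 : g 0 = ∅) (hcov : ∀ i, ∃ k, i ∈ g k) : ∃ φ : I → ℕ, ∀ k, φ ⁻¹' {k} = g (k + 1) \ g k := by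
  classical
  have hcov' (i : I) : ∃ k, i ∈ g (k + 1) :=
    let ⟨k, hk⟩ := hcov i; ⟨k, hg k.le_succ hk⟩
  refine ⟨fun i => Nat.find (hcov' i), fun k => ?_⟩
  ext i
  simp only [mem_preimage, mem_singleton_iff, Nat.find_eq_iff, mem_sdiff]
  refine and_congr_right' ⟨fun h hk => ?_, fun h n hn hn' => h (hg hn hn')⟩
  cases k with
  | zero => simp [h0] at hk
  | succ m => exact h m m.lt_succ_self hk

section CylinderSets

variable {I X : Type*} [TopologicalSpace X]

theorem exists_finset_setOf_eqOn_subset {U : Set (I → X)} (hU : IsOpen U) {y : I → X}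
    (hy : y ∈ U) : ∃ t : Finset I, {z | EqOn z y t} ⊆ U := by
  obtain ⟨t, u, hu, htU⟩ := isOpen_pi_iff.1 hU y hy
  exact ⟨t, fun z hz => htU fun i hi => hz hi ▸ (hu i hi).2⟩

variable [DiscreteTopology X]

theorem isOpen_setOf_eqOn {s : Set I} (hs : s.Finite) (w : I → X) :
    IsOpen {z : I → X | EqOn z w s} :=
  isOpen_set_pi hs fun i _ => isOpen_discrete {w i}

-- `A` plays the role of a set of representatives of the patterns on `s`, handled one at a time.
theorem exists_disjoint_forall_setOf_eqOn_subset [Nonempty X] {U : Set (I → X)}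
    (hUo : IsOpen U) (hUd : Dense U) (s : Finset I) {A : Set (I → X)} (hA : A.Finite) :
    ∃ (t : Finset I) (w : I → X), Disjoint t s ∧
      ∀ a ∈ A, {z | EqOn z a s ∧ EqOn z w t} ⊆ U := by
  classical
  induction A, hA using Set.Finite.induction_on with
  | empty => exact ⟨∅, fun _ => Classical.ofNonempty, Finset.disjoint_empty_left s, by simp⟩
  | @insert a A _ _ ih =>
    obtain ⟨t, w, hts, htU⟩ := ih
    set C := {z | EqOn z a s ∧ EqOn z w t}
    have hCo : IsOpen C := (isOpen_setOf_eqOn s.finite_toSet a).inter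
      (isOpen_setOf_eqOn t.finite_toSet w)
    have hC : (s : Set I).piecewise a w ∈ C :=
      ⟨piecewise_eqOn _ _ _, (piecewise_eqOn_compl _ _ _).mono
        (subset_compl_iff_disjoint_right.2 (Finset.disjoint_coe.2 hts))⟩
    obtain ⟨y, hyC, hyU⟩ := hUd.inter_open_nonempty C hCo ⟨_, hC⟩
    obtain ⟨t', ht'⟩ := exists_finset_setOf_eqOn_subset (hCo.inter hUo) ⟨hyC, hyU⟩
    refine ⟨t ∪ (t' \ s), y, Finset.disjoint_union_left.2 ⟨hts, Finset.sdiff_disjoint⟩, ?_⟩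
    rintro b hb z ⟨hzs, hzt⟩
    rcases hb with rfl | hb
    · refine (ht' fun i hi => ?_).2
      by_cases his : i ∈ s
      · exact (hzs his).trans (hyC.1 his).symm
      · exact hzt (by simp [hi, his])
    · exact htU b hb ⟨hzs, fun i hi => (hzt (by simp [hi])).trans (hyC.2 hi)⟩

theorem exists_disjoint_setOf_eqOn_subset [Finite X] [Nonempty X] {U : Set (I → X)}
    (hUo : IsOpen U) (hUd : Dense U) (s : Finset I) :
    ∃ (t : Finset I) (w : I → X), Disjoint t s ∧ {z | EqOn z w t} ⊆ U := by
  let r : (I → X) → (s → X) := fun z i => z i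
  obtain ⟨A, -, hA, hAr⟩ := exists_subset_image_finite_and.1
    ⟨range r, image_univ.symm.subset, (range r).toFinite, rfl⟩
  obtain ⟨t, w, hts, htU⟩ := exists_disjoint_forall_setOf_eqOn_subset hUo hUd s hA
  refine ⟨t, w, hts, fun z hz => ?_⟩
  obtain ⟨a, ha, haz⟩ := hAr ▸ mem_range_self (f := r) z
  exact htU a ha ⟨fun i hi => (congrFun haz ⟨i, hi⟩).symm, hz⟩

theorem isNowhereDense_setOf_forall_not_eqOn {φ : I → ℕ} (hφ : ∀ k, (φ ⁻¹' {k}).Finite)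
    (w : I → X) (n : ℕ) :
    IsNowhereDense {z : I → X | ∀ k, n ≤ k → ¬EqOn z w (φ ⁻¹' {k})} := by
  classical
  have hclosed : IsClosed {z : I → X | ∀ k, n ≤ k → ¬EqOn z w (φ ⁻¹' {k})} := by
    simp only [ofPred_forall]
    exact isClosed_iInter fun k => isClosed_iInter fun _ =>
      (isOpen_setOf_eqOn (hφ k) w).isClosed_compl
  refine hclosed.isNowhereDense_iff.2 (eq_empty_of_forall_notMem fun z hz => ?_)
  obtain ⟨t, ht⟩ := exists_finset_setOf_eqOn_subset isOpen_interior hz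
  obtain ⟨k, hk⟩ := Infinite.exists_notMem_finset (t.image φ ∪ Finset.range n)
  simp only [Finset.mem_union, Finset.mem_image, Finset.mem_range, not_or, not_exists,
    not_and, not_lt] at hk
  -- `t` misses the block `k`, so setting `z` to `w` on that block stays in the interior
  have hz' : (φ ⁻¹' {k}).piecewise w z ∈ interior _ :=
    ht fun i hi => piecewise_eq_of_notMem _ _ _ (hk.1 i hi)
  exact interior_subset hz' k hk.2 (piecewise_eqOn _ _ _)

theorem isMeagre_setOf_finite_eqOn {φ : I → ℕ} (hφ : ∀ k, (φ ⁻¹' {k}).Finite) (w : I → X) :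
    IsMeagre {z : I → X | {k | EqOn z w (φ ⁻¹' {k})}.Finite} := by
  refine (isMeagre_iUnion fun n =>
    (isNowhereDense_setOf_forall_not_eqOn hφ w n).isMeagre).mono fun z hz => ?_
  obtain ⟨n, hn⟩ := hz.bddAbove
  exact mem_iUnion.2 ⟨n + 1, fun k hk hzk => (hn hzk).not_gt hk⟩

theorem IsMeagre.exists_finite_setOf_eqOn [Countable I] [Finite X] [Nonempty X]
    {M : Set (I → X)} (hM : IsMeagre M) :
    ∃ (φ : I → ℕ) (w : I → X), (∀ k, (φ ⁻¹' {k}).Finite) ∧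
      ∀ z ∈ M, {k | EqOn z w (φ ⁻¹' {k})}.Finite := by
  classical
  obtain ⟨U, hUo, hUd, hU, hMU⟩ := hM.exists_antitone_isOpen_dense
  choose T W hTs hTU using fun k => exists_disjoint_setOf_eqOn_subset (hUo k) (hUd k)
  obtain ⟨ι, hι⟩ := exists_injective_nat I
  obtain ⟨g, hg_zero, hg_succ⟩ : ∃ g : ℕ → Finset I, g 0 = ∅ ∧
      ∀ k, g (k + 1) = g k ∪ T k (g k) ∪ ({k} : Finset ℕ).preimage ι hι.injOn :=
    ⟨fun k => Nat.rec ∅ (fun k s => s ∪ T k s ∪ ({k} : Finset ℕ).preimage ι hι.injOn) k,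
      rfl, fun _ => rfl⟩
  have hg : Monotone fun k : ℕ => (↑(g k) : Set I) := by
    refine monotone_nat_of_le_succ fun k => Finset.coe_subset.2 ?_
    rw [hg_succ, Finset.union_assoc]
    exact Finset.subset_union_left
  obtain ⟨φ, hφ⟩ := exists_preimage_singleton_eq_sdiff hg (by simp [hg_zero])
    fun i => ⟨ι i + 1, by simp [hg_succ]⟩
  have hTφ (k : ℕ) : (T k (g k) : Set I) ⊆ φ ⁻¹' {k} := by
    rw [hφ]
    exact fun i hi => ⟨by simp [hg_succ, Finset.mem_coe.1 hi],
      Finset.disjoint_left.1 (hTs k (g k)) hi⟩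
  refine ⟨φ, fun i => W (φ i) (g (φ i)) i, fun k => hφ k ▸ (g (k + 1)).finite_toSet.sdiff,
    fun z hz => ?_⟩
  obtain ⟨n, hn⟩ := hMU z hz
  refine (finite_lt_nat n).subset fun k hk => not_le.1 fun hnk => hn (hU hnk ?_)
  exact hTU k (g k) fun i hi => (hk (hTφ k hi)).trans
    (congrArg (fun m => W m (g m) i) (hTφ k hi))

theorem isMeagre_iff_exists_finite_setOf_eqOn [Countable I] [Finite X] [Nonempty X]
    {M : Set (I → X)} :
    IsMeagre M ↔ ∃ (φ : I → ℕ) (w : I → X), (∀ k, (φ ⁻¹' {k}).Finite) ∧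
      ∀ z ∈ M, {k | EqOn z w (φ ⁻¹' {k})}.Finite :=
  ⟨IsMeagre.exists_finite_setOf_eqOn, fun ⟨_, w, hφ, hM⟩ =>
    (isMeagre_setOf_finite_eqOn hφ w).mono hM⟩

end CylinderSets

theorem chi_eqOn_false_iff {I : Type*} {x s : Set I} :
    EqOn (chi x) (fun _ => false) s ↔ x ∩ s = ∅ := by
  simp only [EqOn, chi, decide_eq_false_iff_not, ← disjoint_iff_inter_eq_empty, disjoint_right]

theorem chi_union_eqOn {I : Type*} {x s : Set I} (w : I → Bool) (h : x ∩ s = ∅) :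
    EqOn (chi (x ∪ {i | w i = true})) w s := fun i hi => by
  have hx : i ∉ x := fun hx => eq_empty_iff_forall_notMem.1 h i ⟨hx, hi⟩
  cases hw : w i <;> simp [chi, hx, hw]

theorem talagrand_meager_filter_general {I : Type} [Countable I]
    (F : Set (Set I)) (hF : IsFilterOn F) :
    IsMeagre (chi '' F) ↔ ∃ φ : I → ℕ, (∀ j : ℕ, (φ ⁻¹' {j}).Finite) ∧
      ∀ x ∈ F, {j : ℕ | x ∩ φ ⁻¹' {j} = ∅}.Finite := by
  rw [isMeagre_iff_exists_finite_setOf_eqOn]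
  constructor
  · rintro ⟨φ, w, hφ, hw⟩
    exact ⟨φ, hφ, fun x hx => (hw _ ⟨_, hF.2.2.1 x hx _ subset_union_left, rfl⟩).subset
      fun k hk => chi_union_eqOn w hk⟩
  · rintro ⟨φ, hφ, hFφ⟩
    refine ⟨φ, fun _ => false, hφ, ?_⟩
    rintro _ ⟨x, hx, rfl⟩
    simpa only [chi_eqOn_false_iff] using hFφ x hx

theorem talagrand_meager_filter {I : Type} [Countable I] [Infinite I]
    (F : Set (Set I)) (hF : IsFilterOn F) :
    IsMeagre (chi '' F) ↔ ∃ φ : I → ℕ, (∀ j : ℕ, (φ ⁻¹' {j}).Finite) ∧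
      ∀ x ∈ F, {j : ℕ | x ∩ φ ⁻¹' {j} = ∅}.Finite :=
  talagrand_meager_filter_general F hF
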